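/- arXiv:1311.1523 — 2 statements merged into one kernel-verified Lean document; each statement's English description precedes it below -/
import Mathlib

section
/- Let n ≥ 3 and let F : ℝⁿ → ℝⁿ be a bijective map of class C¹ such that for all x, y ∈ ℝⁿ, x ≤ y if and only if F(x) ≤ F(y), where ≤ is the causal relation of n-dimensional Minkowski space. Then there exist a real number a > 0, an orthochronous Lorentz matrix A, and a vector b ∈ ℝⁿ such that F(x) = a • (A x) + b for all x ∈ ℝⁿ. -/
open Finset

/-- The Minkowski quadratic form on `ℝⁿ`: `Q v = v₀² - ∑_{i=1}^{n-1} vᵢ²`. -/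
def minkowskiQ {n : ℕ} [NeZero n] (v : Fin n → ℝ) : ℝ :=
  (v 0) ^ 2 - ∑ i ∈ Finset.univ.erase (0 : Fin n), (v i) ^ 2

/-- The causal relation on `n`-dimensional Minkowski space:
`x ≤ y` iff `Q (y - x) ≥ 0` and `(y - x)₀ ≥ 0`. -/
def causalLE {n : ℕ} [NeZero n] (x y : Fin n → ℝ) : Prop :=
  0 ≤ minkowskiQ (y - x) ∧ 0 ≤ (y - x) 0

/-- A matrix is Lorentz if it preserves the Minkowski quadratic form. -/
def IsLorentz {n : ℕ} [NeZero n] (A : Matrix (Fin n) (Fin n) ℝ) : Prop :=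
  ∀ v : Fin n → ℝ, minkowskiQ (A.mulVec v) = minkowskiQ v

/-!
A causal automorphism `f` preserves the relation `Q (y - x) = 0`: for `x ≤ y` it holds exactly when
the causal interval `[x, y]` is a chain, since a timelike interval contains two spacelike separated
points. So `f` maps light lines onto light lines. Two light lines without a lightlike separated pair
of points are parallel with orthogonal offset (and parallel light lines at a spacelike offset have
no such pair); hence `f` maps every null hyperplane `⟪ℓ, · - x⟫ = 0` (`⟪·, ·⟫` the Minkowski form)
into a null hyperplane, whose normal, the image direction of `ℓ`, is the same for all `x` up to
scale.

For differentiable `f`, `Df(x) ℓ` is therefore a multiple of one fixed null vector, and pairing with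
the normal belonging to a second null direction `ℓ'` shows that the multiple is constant along the
hyperplanes `⟪ℓ', ·⟫ = const`. Two such directions join any two points, so for `n ≥ 3` the
derivative is constant on a spanning set of null vectors and `f` is affine. Its linear part
preserves the null cone, hence is a positive multiple of a Lorentz map, orthochronous because `f`
preserves the time orientation.
-/

variable {n : ℕ} [NeZero n]

def minkowskiForm : LinearMap.BilinForm ℝ (Fin n → ℝ) :=
  LinearMap.mk₂ ℝ (fun u v => u 0 * v 0 - ∑ i ∈ univ.erase 0, u i * v i)
    (fun u v w => by simp only [Pi.add_apply, add_mul, sum_add_distrib]; ring)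
    (fun a u v => by simp only [Pi.smul_apply, smul_eq_mul, mul_sub, mul_sum]; ring_nf)
    (fun u v w => by simp only [Pi.add_apply, mul_add, sum_add_distrib]; ring)
    (fun a u v => by simp only [Pi.smul_apply, smul_eq_mul, mul_sub, mul_sum]; ring_nf)

lemma minkowskiForm_apply (u v : Fin n → ℝ) :
    minkowskiForm u v = u 0 * v 0 - ∑ i ∈ univ.erase 0, u i * v i := rfl

lemma minkowskiForm_comm (u v : Fin n → ℝ) : minkowskiForm u v = minkowskiForm v u := by
  simp only [minkowskiForm_apply, mul_comm (u _)]

lemma minkowskiQ_eq_form (v : Fin n → ℝ) : minkowskiQ v = minkowskiForm v v := by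
  simp only [minkowskiQ, minkowskiForm_apply, sq]

lemma minkowskiQ_add (u v : Fin n → ℝ) :
    minkowskiQ (u + v) = minkowskiQ u + minkowskiQ v + 2 * minkowskiForm u v := by
  simp only [minkowskiQ_eq_form, map_add, LinearMap.add_apply, minkowskiForm_comm v u]; ring

lemma minkowskiQ_sub (u v : Fin n → ℝ) :
    minkowskiQ (u - v) = minkowskiQ u + minkowskiQ v - 2 * minkowskiForm u v := by
  simp only [minkowskiQ_eq_form, map_sub, LinearMap.sub_apply, minkowskiForm_comm v u]; ring

lemma minkowskiQ_smul (a : ℝ) (v : Fin n → ℝ) : minkowskiQ (a • v) = a ^ 2 * minkowskiQ v := by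
  simp only [minkowskiQ_eq_form, map_smul, LinearMap.smul_apply, smul_eq_mul]; ring

lemma minkowskiQ_sub_comm (x y : Fin n → ℝ) : minkowskiQ (x - y) = minkowskiQ (y - x) := by
  rw [← neg_sub, ← neg_one_smul ℝ, minkowskiQ_smul]; ring

lemma minkowskiForm_single_zero (v : Fin n → ℝ) : minkowskiForm v (Pi.single 0 1) = v 0 := by
  simp [minkowskiForm_apply, Pi.single_apply]

lemma minkowskiForm_single_of_ne_zero (v : Fin n → ℝ) {i : Fin n} (hi : i ≠ 0) :
    minkowskiForm v (Pi.single i 1) = -v i := by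
  simp [minkowskiForm_apply, Pi.single_apply, hi, Ne.symm hi]

lemma minkowskiQ_single_zero : minkowskiQ (Pi.single 0 1 : Fin n → ℝ) = 1 := by
  rw [minkowskiQ_eq_form, minkowskiForm_single_zero, Pi.single_eq_same]

lemma minkowskiQ_single_of_ne_zero {i : Fin n} (hi : i ≠ 0) :
    minkowskiQ (Pi.single i 1 : Fin n → ℝ) = -1 := by
  rw [minkowskiQ_eq_form, minkowskiForm_single_of_ne_zero _ hi, Pi.single_eq_same]

lemma minkowskiForm_single_single {i j : Fin n} (hj : j ≠ 0) (hij : i ≠ j) :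
    minkowskiForm (Pi.single i 1) (Pi.single j 1 : Fin n → ℝ) = 0 := by
  rw [minkowskiForm_single_of_ne_zero _ hj, Pi.single_eq_of_ne' hij, neg_zero]

lemma minkowskiQ_nonpos_of_apply_zero {v : Fin n → ℝ} (h : v 0 = 0) : minkowskiQ v ≤ 0 := by
  simp only [minkowskiQ, h]; nlinarith [sum_nonneg fun i (_ : i ∈ univ.erase 0) => sq_nonneg (v i)]

lemma eq_zero_of_apply_zero_of_minkowskiQ_eq_zero {v : Fin n → ℝ} (h0 : v 0 = 0)
    (hq : minkowskiQ v = 0) : v = 0 := by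
  have hsum : ∑ i ∈ univ.erase 0, v i ^ 2 = 0 := by simpa [minkowskiQ, h0] using hq
  have := (sum_eq_zero_iff_of_nonneg fun i _ => sq_nonneg (v i)).1 hsum
  ext i
  rcases eq_or_ne i 0 with rfl | hi
  · exact h0
  · simpa using this i (mem_erase.2 ⟨hi, mem_univ i⟩)

lemma apply_zero_ne_zero_of_null {ℓ : Fin n → ℝ} (hℓ : minkowskiQ ℓ = 0) (hℓ0 : ℓ ≠ 0) :
    ℓ 0 ≠ 0 :=
  fun h => hℓ0 (eq_zero_of_apply_zero_of_minkowskiQ_eq_zero h hℓ)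

/-- Subtracting from `v` the multiple of `ℓ` with the same time component leaves a vector with zero
time component, whose `Q` is still `Q v` because `ℓ` is null and orthogonal to `v`. -/
lemma minkowskiQ_neg_or_eq_smul_of_form_eq_zero {v ℓ : Fin n → ℝ} (hℓ : minkowskiQ ℓ = 0)
    (hℓ0 : ℓ ≠ 0) (hvℓ : minkowskiForm v ℓ = 0) : minkowskiQ v < 0 ∨ ∃ t : ℝ, v = t • ℓ := by
  set w := v - (v 0 / ℓ 0) • ℓ
  have hw0 : w 0 = 0 := by
    simp [w, div_mul_cancel₀ _ (apply_zero_ne_zero_of_null hℓ hℓ0)]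
  have hwq : minkowskiQ w = minkowskiQ v := by
    simp only [w, minkowskiQ_sub, minkowskiQ_smul, hℓ, map_smul, smul_eq_mul, hvℓ]; ring
  rcases (minkowskiQ_nonpos_of_apply_zero hw0).lt_or_eq with h | h
  · exact Or.inl (hwq ▸ h)
  · exact Or.inr ⟨v 0 / ℓ 0, sub_eq_zero.1 (eq_zero_of_apply_zero_of_minkowskiQ_eq_zero hw0 h)⟩

lemma exists_eq_smul_of_null_of_form_eq_zero {v ℓ : Fin n → ℝ} (hv : minkowskiQ v = 0)
    (hℓ : minkowskiQ ℓ = 0) (hℓ0 : ℓ ≠ 0) (hvℓ : minkowskiForm v ℓ = 0) :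
    ∃ t : ℝ, v = t • ℓ :=
  (minkowskiQ_neg_or_eq_smul_of_form_eq_zero hℓ hℓ0 hvℓ).resolve_left hv.not_lt

lemma exists_form_eq_and_form_eq {u v : Fin n → ℝ} (hu : minkowskiQ u = 0)
    (hv : minkowskiQ v = 0) (huv : minkowskiForm u v ≠ 0) (a b : ℝ) :
    ∃ z, minkowskiForm u z = a ∧ minkowskiForm v z = b := by
  rw [minkowskiQ_eq_form] at hu hv
  refine ⟨(b / minkowskiForm u v) • u + (a / minkowskiForm u v) • v, ?_, ?_⟩ <;>
    simp only [map_add, map_smul, smul_eq_mul, hu, hv, minkowskiForm_comm v u] <;>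
    field_simp <;> ring

def IsFutureCausal (v : Fin n → ℝ) : Prop := 0 ≤ minkowskiQ v ∧ 0 ≤ v 0

lemma causalLE_iff_isFutureCausal {x y : Fin n → ℝ} : causalLE x y ↔ IsFutureCausal (y - x) :=
  Iff.rfl

/-- Reverse Cauchy–Schwarz: the spatial parts satisfy `(∑ uᵢvᵢ)² ≤ (∑ uᵢ²)(∑ vᵢ²) ≤ u₀²v₀²`. -/
lemma IsFutureCausal.form_nonneg {u v : Fin n → ℝ} (hu : IsFutureCausal u)
    (hv : IsFutureCausal v) : 0 ≤ minkowskiForm u v := by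
  obtain ⟨hu, hu0⟩ := hu
  obtain ⟨hv, hv0⟩ := hv
  simp only [minkowskiQ, sub_nonneg] at hu hv
  have hcs := sum_mul_sq_le_sq_mul_sq (univ.erase (0 : Fin n)) u v
  have hprod := mul_le_mul hu hv (sum_nonneg fun i _ => sq_nonneg (v i)) (sq_nonneg (u 0))
  rw [minkowskiForm_apply, sub_nonneg]
  exact (abs_le_of_sq_le_sq' (by linarith) (mul_nonneg hu0 hv0)).2

lemma symmGen_causalLE_of_minkowskiQ_sub_nonneg {x y : Fin n → ℝ}
    (h : 0 ≤ minkowskiQ (y - x)) : Relation.SymmGen causalLE x y := by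
  rcases le_total 0 ((y - x) 0) with h0 | h0
  · exact .of_rel ⟨h, h0⟩
  · refine .of_rel_symm ⟨minkowskiQ_sub_comm x y ▸ h, ?_⟩
    simpa using h0

lemma not_symmGen_causalLE_of_minkowskiQ_sub_neg {x y : Fin n → ℝ}
    (h : minkowskiQ (y - x) < 0) : ¬Relation.SymmGen causalLE x y := by
  rintro (hxy | hyx)
  · exact h.not_ge hxy.1
  · exact h.not_ge (minkowskiQ_sub_comm x y ▸ hyx.1)

def causalIcc (x y : Fin n → ℝ) : Set (Fin n → ℝ) := {z | causalLE x z ∧ causalLE z y}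

lemma form_eq_zero_of_mem_causalIcc {x y z : Fin n → ℝ} (h : minkowskiQ (y - x) = 0)
    (hz : z ∈ causalIcc x y) : minkowskiQ (z - x) = 0 ∧ minkowskiForm (z - x) (y - x) = 0 := by
  obtain ⟨hxz, hzy⟩ := hz
  have hsum := minkowskiQ_add (z - x) (y - z)
  have hB := IsFutureCausal.form_nonneg hxz hzy
  rw [sub_add_sub_cancel', h] at hsum
  have hq : minkowskiQ (z - x) = 0 := by linarith [hxz.1, hzy.1]
  refine ⟨hq, ?_⟩
  rw [show y - x = (z - x) + (y - z) by abel, map_add, ← minkowskiQ_eq_form, hq]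
  linarith [hxz.1, hzy.1]

/-- Both `z - x` and `w - x` are null and orthogonal to the null vector `y - x`, and the reverse
Cauchy–Schwarz inequality forces them to be orthogonal to each other. -/
lemma isChain_causalIcc_of_null {x y : Fin n → ℝ} (h : minkowskiQ (y - x) = 0) :
    IsChain causalLE (causalIcc x y) := by
  intro z hz w hw _
  obtain ⟨hzq, hzB⟩ := form_eq_zero_of_mem_causalIcc h hz
  obtain ⟨hwq, -⟩ := form_eq_zero_of_mem_causalIcc h hw
  have h1 := IsFutureCausal.form_nonneg hz.1 hw.1
  have h2 := IsFutureCausal.form_nonneg hz.1 hw.2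
  rw [show y - x = (w - x) + (y - w) by abel, map_add] at hzB
  apply symmGen_causalLE_of_minkowskiQ_sub_nonneg
  rw [← sub_sub_sub_cancel_right w z x, minkowskiQ_sub, hzq, hwq, minkowskiForm_comm]
  linarith

lemma isFutureCausal_half_add_smul_single {v : Fin n → ℝ} (hv : IsFutureCausal v) {i : Fin n}
    (hi : i ≠ 0) {δ : ℝ} (hδ : |δ| * (|δ| + |v i|) ≤ minkowskiQ v / 4) :
    IsFutureCausal ((1 / 2 : ℝ) • v + δ • Pi.single i 1) := by
  refine ⟨?_, by simpa [Pi.single_apply, Ne.symm hi] using hv.2⟩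
  have hδv : δ * v i ≤ |δ| * |v i| := by rw [← abs_mul]; exact le_abs_self _
  rw [minkowskiQ_add, minkowskiQ_smul, minkowskiQ_smul, minkowskiQ_single_of_ne_zero hi]
  simp only [map_smul, LinearMap.smul_apply, minkowskiForm_single_of_ne_zero _ hi, smul_eq_mul]
  rw [← sq_abs δ]
  nlinarith

/-- A timelike interval contains two points displaced from its midpoint by `±ε eᵢ`; their
difference is spacelike, so they are incomparable. -/
lemma not_isChain_causalIcc_of_timelike (hn : 2 ≤ n) {x y : Fin n → ℝ} (hxy : causalLE x y)
    (hq : 0 < minkowskiQ (y - x)) : ¬IsChain causalLE (causalIcc x y) := by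
  set v := y - x
  set i : Fin n := ⟨1, hn⟩
  have hi : i ≠ 0 := Fin.ne_of_val_ne one_ne_zero
  set ε := min 1 (minkowskiQ v / 4 / (1 + |v i|))
  have hε : 0 < ε := lt_min one_pos (by positivity)
  have hεv : ε * (ε + |v i|) ≤ minkowskiQ v / 4 :=
    calc ε * (ε + |v i|) ≤ minkowskiQ v / 4 / (1 + |v i|) * (1 + |v i|) := by
          gcongr
          exacts [min_le_right _ _, min_le_left _ _]
      _ = minkowskiQ v / 4 := by field_simp
  set z : ℝ → Fin n → ℝ := fun δ => x + (1 / 2 : ℝ) • v + δ • Pi.single i 1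
  have hmem (δ : ℝ) (hδ : |δ| = ε) : z δ ∈ causalIcc x y := by
    refine ⟨?_, ?_⟩
    · rw [causalLE_iff_isFutureCausal,
        show z δ - x = (1 / 2 : ℝ) • v + δ • Pi.single i 1 by simp only [z]; abel]
      exact isFutureCausal_half_add_smul_single hxy hi (by rw [hδ]; exact hεv)
    · rw [causalLE_iff_isFutureCausal,
        show y - z δ = (1 / 2 : ℝ) • v + (-δ) • Pi.single i 1 by simp only [z, v]; module]
      exact isFutureCausal_half_add_smul_single hxy hi (by rw [abs_neg, hδ]; exact hεv)
  have hspace : minkowskiQ (z ε - z (-ε)) < 0 := by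
    rw [show z ε - z (-ε) = (2 * ε) • (Pi.single i 1 : Fin n → ℝ) by simp only [z]; module,
      minkowskiQ_smul, minkowskiQ_single_of_ne_zero hi]
    nlinarith
  intro hchain
  refine not_symmGen_causalLE_of_minkowskiQ_sub_neg hspace
    (hchain (hmem _ (abs_neg ε ▸ abs_of_pos hε)) (hmem _ (abs_of_pos hε)) fun h => ?_)
  exact hspace.ne (by rw [h, sub_self]; simp [minkowskiQ])

lemma minkowskiQ_sub_eq_zero_iff_isChain (hn : 2 ≤ n) {x y : Fin n → ℝ} :
    minkowskiQ (y - x) = 0 ↔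
      Relation.SymmGen causalLE x y ∧ IsChain causalLE (causalIcc x y) ∧
        IsChain causalLE (causalIcc y x) := by
  refine ⟨fun h => ⟨symmGen_causalLE_of_minkowskiQ_sub_nonneg h.ge, isChain_causalIcc_of_null h,
    isChain_causalIcc_of_null (minkowskiQ_sub_comm x y ▸ h)⟩, ?_⟩
  rintro ⟨hxy | hyx, hchain, hchain'⟩
  · by_contra hq
    exact not_isChain_causalIcc_of_timelike hn hxy (hxy.1.lt_of_ne' hq) hchain
  · by_contra hq
    rw [← minkowskiQ_sub_comm] at hq
    exact not_isChain_causalIcc_of_timelike hn hyx (hyx.1.lt_of_ne' hq) hchain'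

def lineThrough {E : Type*} [AddCommGroup E] [Module ℝ E] (x v : E) : Set E :=
  Set.range fun t : ℝ => x + t • v

lemma mem_lineThrough_iff_of_null {ℓ : Fin n → ℝ} (hℓ : minkowskiQ ℓ = 0) (hℓ0 : ℓ ≠ 0)
    {x p : Fin n → ℝ} :
    p ∈ lineThrough x ℓ ↔ minkowskiQ (p - x) = 0 ∧ minkowskiQ (p - (x + ℓ)) = 0 := by
  constructor
  · rintro ⟨t, rfl⟩
    rw [add_sub_cancel_left, show x + t • ℓ - (x + ℓ) = (t - 1) • ℓ by module, minkowskiQ_smul,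
      minkowskiQ_smul, hℓ]
    simp
  · rintro ⟨hpx, hpxℓ⟩
    rw [← sub_sub, minkowskiQ_sub, hpx, hℓ] at hpxℓ
    obtain ⟨t, ht⟩ := exists_eq_smul_of_null_of_form_eq_zero hpx hℓ hℓ0 (by linarith)
    exact ⟨t, by dsimp only; rw [← ht, add_sub_cancel]⟩

def NoNullSeparation (s t : Set (Fin n → ℝ)) : Prop :=
  ∀ p ∈ s, ∀ q ∈ t, minkowskiQ (q - p) ≠ 0

lemma noNullSeparation_lineThrough_of_spacelike {ℓ w : Fin n → ℝ} (hℓ : minkowskiQ ℓ = 0)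
    (hwℓ : minkowskiForm w ℓ = 0) (hw : minkowskiQ w < 0) (x : Fin n → ℝ) :
    NoNullSeparation (lineThrough x ℓ) (lineThrough (x + w) ℓ) := by
  rintro _ ⟨s, rfl⟩ _ ⟨t, rfl⟩
  rw [show x + w + t • ℓ - (x + s • ℓ) = w + (t - s) • ℓ by module, minkowskiQ_add,
    minkowskiQ_smul, hℓ, map_smul, hwℓ]
  simpa using hw.ne

/-- On the two lines, `Q` of the difference is `Q d + 2t⟪d, ℓ₂⟫ - 2s⟪ℓ₁, d⟫ - 2st⟪ℓ₁, ℓ₂⟫`,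
which has a zero unless both `⟪ℓ₁, ℓ₂⟫` and `⟪ℓ₁, d⟫` vanish. -/
lemma form_eq_zero_of_noNullSeparation {ℓ₁ ℓ₂ a b : Fin n → ℝ} (hℓ₁ : minkowskiQ ℓ₁ = 0)
    (hℓ₂ : minkowskiQ ℓ₂ = 0) (h : NoNullSeparation (lineThrough a ℓ₁) (lineThrough b ℓ₂)) :
    minkowskiForm ℓ₁ ℓ₂ = 0 ∧ minkowskiForm ℓ₁ (b - a) = 0 := by
  set d := b - a
  have hexp : ∀ s t : ℝ, minkowskiQ (b + t • ℓ₂ - (a + s • ℓ₁)) = minkowskiQ d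
      + 2 * t * minkowskiForm d ℓ₂ - 2 * s * minkowskiForm ℓ₁ d
      - 2 * s * t * minkowskiForm ℓ₁ ℓ₂ := by
    intro s t
    rw [show b + t • ℓ₂ - (a + s • ℓ₁) = d + t • ℓ₂ - s • ℓ₁ by simp only [d]; abel,
      minkowskiQ_sub, minkowskiQ_add]
    simp only [minkowskiQ_smul, hℓ₁, hℓ₂, map_add, map_smul, LinearMap.add_apply,
      LinearMap.smul_apply, smul_eq_mul, minkowskiForm_comm ℓ₂ ℓ₁, minkowskiForm_comm d ℓ₁]
    ring
  have hline : ∀ s t : ℝ, minkowskiQ (b + t • ℓ₂ - (a + s • ℓ₁)) ≠ 0 :=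
    fun s t => h _ ⟨s, rfl⟩ _ ⟨t, rfl⟩
  have h₁₂ : minkowskiForm ℓ₁ ℓ₂ = 0 := by
    by_contra h₁₂
    obtain ⟨s, hs⟩ : ∃ s : ℝ, minkowskiForm d ℓ₂ - s * minkowskiForm ℓ₁ ℓ₂ = 1 :=
      ⟨(minkowskiForm d ℓ₂ - 1) / minkowskiForm ℓ₁ ℓ₂, by field_simp; ring⟩
    set t := s * minkowskiForm ℓ₁ d - minkowskiQ d / 2
    refine hline s t ?_
    rw [hexp]
    linear_combination 2 * t * hs
  refine ⟨h₁₂, by_contra fun h₁d => hline (minkowskiQ d / (2 * minkowskiForm ℓ₁ d)) 0 ?_⟩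
  rw [hexp, h₁₂]
  field_simp
  ring

lemma HasDerivAt.exists_eq_smul_of_mem_lineThrough {E : Type*} [NormedAddCommGroup E]
    [NormedSpace ℝ E] {γ : ℝ → E} {D p m : E} {t : ℝ} (hγ : HasDerivAt γ D t) (hm : m ≠ 0)
    (h : ∀ s, γ s ∈ lineThrough p m) : ∃ c : ℝ, D = c • m := by
  obtain ⟨φ, hφ⟩ := SeparatingDual.exists_eq_one (R := ℝ) hm
  have hγ' : (fun s => p + (φ (γ s) - φ p) • m) = γ := by
    funext s
    obtain ⟨c, hc⟩ := h s
    simp [← hc, hφ]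
  refine ⟨φ D, hγ.unique ?_⟩
  simpa [hγ'] using
    (((φ.hasFDerivAt.comp_hasDerivAt t hγ).sub_const (φ p)).smul_const m).const_add p

def lightVec (i : Fin n) (ε : ℝ) : Fin n → ℝ := Pi.single 0 1 + ε • Pi.single i 1

lemma form_lightVec {i j : Fin n} (hi : i ≠ 0) (hj : j ≠ 0) (ε δ : ℝ) :
    minkowskiForm (lightVec i ε) (lightVec j δ) = 1 - ε * δ * if i = j then 1 else 0 := by
  rw [show lightVec j δ = Pi.single 0 1 + δ • Pi.single j 1 from rfl, map_add (minkowskiForm _),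
    map_smul (minkowskiForm _), minkowskiForm_single_zero, minkowskiForm_single_of_ne_zero _ hj]
  simp [lightVec, Pi.single_apply, hi, Ne.symm hj, eq_comm, mul_comm δ, sub_eq_add_neg]

lemma minkowskiQ_lightVec {i : Fin n} (hi : i ≠ 0) {ε : ℝ} (hε : ε ^ 2 = 1) :
    minkowskiQ (lightVec i ε) = 0 := by
  rw [minkowskiQ_eq_form, form_lightVec hi hi, if_pos rfl]; linear_combination -hε

lemma LinearMap.eq_of_apply_lightVec {M : Type*} [AddCommGroup M] [Module ℝ M] (hn : 2 ≤ n)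
    {g h : (Fin n → ℝ) →ₗ[ℝ] M}
    (hgh : ∀ i ≠ 0, ∀ ε : ℝ, ε ^ 2 = 1 → g (lightVec i ε) = h (lightVec i ε)) : g = h := by
  set i₁ : Fin n := ⟨1, hn⟩
  have hi₁ : i₁ ≠ 0 := Fin.ne_of_val_ne one_ne_zero
  have h₀ : g (Pi.single 0 1) = h (Pi.single 0 1) := by
    have hsum : (Pi.single 0 1 : Fin n → ℝ) = (1 / 2 : ℝ) • (lightVec i₁ 1 + lightVec i₁ (-1)) := by
      simp only [lightVec]; module
    rw [hsum, map_smul, map_smul, map_add, map_add, hgh _ hi₁ 1 (by norm_num),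
      hgh _ hi₁ (-1) (by norm_num)]
  refine (Pi.basisFun ℝ (Fin n)).ext fun i => ?_
  rw [Pi.basisFun_apply]
  rcases eq_or_ne i 0 with rfl | hi
  · exact h₀
  · rw [show (Pi.single i 1 : Fin n → ℝ) = lightVec i 1 - Pi.single 0 1 by simp [lightVec],
      map_sub, map_sub, h₀, hgh i hi 1 (by norm_num)]

lemma exists_ne_zero_ne (hn : 3 ≤ n) (i : Fin n) : ∃ j : Fin n, j ≠ 0 ∧ j ≠ i := by
  by_cases hi : i = ⟨1, by omega⟩
  · refine ⟨⟨2, by omega⟩, Fin.ne_of_val_ne (by norm_num), ?_⟩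
    rw [hi]
    exact Fin.ne_of_val_ne (by norm_num)
  · exact ⟨⟨1, by omega⟩, Fin.ne_of_val_ne (by norm_num), Ne.symm hi⟩

def PreservesNull (T : (Fin n → ℝ) →ₗ[ℝ] (Fin n → ℝ)) : Prop :=
  ∀ ℓ, minkowskiQ ℓ = 0 → minkowskiQ (T ℓ) = 0

namespace PreservesNull

variable {T : (Fin n → ℝ) →ₗ[ℝ] (Fin n → ℝ)}

lemma form_single_zero_and_minkowskiQ_single (hT : PreservesNull T) {i : Fin n} (hi : i ≠ 0) :
    minkowskiForm (T (Pi.single 0 1)) (T (Pi.single i 1)) = 0 ∧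
      minkowskiQ (T (Pi.single i 1)) = -minkowskiQ (T (Pi.single 0 1)) := by
  have hp := hT _ (minkowskiQ_lightVec hi (ε := 1) (by norm_num))
  have hm := hT _ (minkowskiQ_lightVec hi (ε := -1) (by norm_num))
  simp only [lightVec, map_add, map_smul, minkowskiQ_add, minkowskiQ_smul, smul_eq_mul] at hp hm
  constructor <;> linarith

/-- Polarization of `Q ∘ T` on the null vector `5e₀ + 3eᵢ + 4eⱼ`. -/
lemma form_single_single (hT : PreservesNull T) {i j : Fin n} (hi : i ≠ 0) (hj : j ≠ 0)
    (hij : i ≠ j) : minkowskiForm (T (Pi.single i 1)) (T (Pi.single j 1)) = 0 := by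
  have hnull : minkowskiQ ((5 : ℝ) • Pi.single 0 1 + (3 : ℝ) • Pi.single i 1
      + (4 : ℝ) • (Pi.single j 1 : Fin n → ℝ)) = 0 := by
    simp only [minkowskiQ_add, minkowskiQ_smul, map_add, map_smul, LinearMap.add_apply,
      LinearMap.smul_apply, smul_eq_mul, minkowskiQ_single_zero, minkowskiQ_single_of_ne_zero hi,
      minkowskiQ_single_of_ne_zero hj, minkowskiForm_single_single hi (Ne.symm hi),
      minkowskiForm_single_single hj (Ne.symm hj), minkowskiForm_single_single hj hij]
    norm_num
  have h := hT _ hnull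
  obtain ⟨hi₁, hi₂⟩ := hT.form_single_zero_and_minkowskiQ_single hi
  obtain ⟨hj₁, hj₂⟩ := hT.form_single_zero_and_minkowskiQ_single hj
  simp only [minkowskiQ_add, minkowskiQ_smul, map_add, map_smul, LinearMap.add_apply,
    LinearMap.smul_apply, smul_eq_mul, hi₁, hi₂, hj₁, hj₂] at h
  linarith

lemma minkowskiQ_map (hT : PreservesNull T) (v : Fin n → ℝ) :
    minkowskiQ (T v) = minkowskiQ (T (Pi.single 0 1)) * minkowskiQ v := by
  set c := minkowskiQ (T (Pi.single 0 1))
  suffices hform : minkowskiForm.compl₁₂ T T = c • minkowskiForm by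
    rw [minkowskiQ_eq_form, minkowskiQ_eq_form, ← LinearMap.compl₁₂_apply, hform]
    rfl
  refine LinearMap.BilinForm.ext_basis (Pi.basisFun ℝ (Fin n)) fun i j => ?_
  simp only [Pi.basisFun_apply, LinearMap.compl₁₂_apply, LinearMap.smul_apply, smul_eq_mul]
  rcases eq_or_ne j 0 with rfl | hj
  · rcases eq_or_ne i 0 with rfl | hi
    · rw [← minkowskiQ_eq_form, ← minkowskiQ_eq_form, minkowskiQ_single_zero, mul_one]
    · rw [minkowskiForm_comm, (hT.form_single_zero_and_minkowskiQ_single hi).1,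
        minkowskiForm_comm, minkowskiForm_single_single hi (Ne.symm hi), mul_zero]
  rcases eq_or_ne i j with rfl | hij
  · rw [← minkowskiQ_eq_form, ← minkowskiQ_eq_form,
      (hT.form_single_zero_and_minkowskiQ_single hj).2, minkowskiQ_single_of_ne_zero hj,
      mul_neg_one]
  rw [minkowskiForm_single_single hj hij, mul_zero]
  rcases eq_or_ne i 0 with rfl | hi
  · exact (hT.form_single_zero_and_minkowskiQ_single hj).1
  · exact hT.form_single_single hi hj hij

lemma exists_lorentz (hn : 2 ≤ n) (hT : PreservesNull T) (hT_inj : Function.Injective T)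
    (hT₀ : IsFutureCausal (T (Pi.single 0 1))) :
    ∃ (a : ℝ) (A : Matrix (Fin n) (Fin n) ℝ),
      0 < a ∧ IsLorentz A ∧ 0 < A 0 0 ∧ ∀ v, T v = a • A.mulVec v := by
  set c := minkowskiQ (T (Pi.single 0 1))
  have hQT := hT.minkowskiQ_map
  -- if `c = 0`, the images of `e₁` and `e₀` are null and orthogonal, hence parallel
  have hc : 0 < c := by
    refine hT₀.1.lt_of_ne fun hc => ?_
    have hnull (v : Fin n → ℝ) : minkowskiQ (T v) = 0 := by rw [hQT, ← hc, zero_mul]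
    set i : Fin n := ⟨1, hn⟩
    have hi : i ≠ 0 := Fin.ne_of_val_ne one_ne_zero
    have horth := minkowskiQ_add (T (Pi.single i 1)) (T (Pi.single 0 1))
    rw [← map_add, hnull, hnull, hnull] at horth
    obtain ⟨t, ht⟩ := exists_eq_smul_of_null_of_form_eq_zero (hnull (Pi.single i 1))
      (hnull (Pi.single 0 1)) ((map_ne_zero_iff T hT_inj).2 (by simp)) (by linarith)
    have := congrFun (hT_inj (ht.trans (map_smul T t _).symm)) i
    simp [hi] at this
  have hT₀0 : 0 < T (Pi.single 0 1) 0 :=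
    hT₀.2.lt_of_ne fun h => (minkowskiQ_nonpos_of_apply_zero h.symm).not_gt hc
  have ha : 0 < √c := Real.sqrt_pos.2 hc
  have hA (v : Fin n → ℝ) : ((√c)⁻¹ • LinearMap.toMatrix' T).mulVec v = (√c)⁻¹ • T v := by
    rw [Matrix.smul_mulVec, LinearMap.toMatrix'_mulVec]
  refine ⟨√c, (√c)⁻¹ • LinearMap.toMatrix' T, ha, fun v => ?_, ?_, fun v => ?_⟩
  · rw [hA, minkowskiQ_smul, hQT, inv_pow, Real.sq_sqrt hc.le, inv_mul_cancel_left₀ hc.ne']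
  · have h00 : ((√c)⁻¹ • LinearMap.toMatrix' T) 0 0 = (√c)⁻¹ * T (Pi.single 0 1) 0 := by
      simp [LinearMap.toMatrix'_apply]
    rw [h00]
    positivity
  · rw [hA, smul_smul, mul_inv_cancel₀ ha.ne', one_smul]

end PreservesNull

abbrev CausalAut (n : ℕ) [NeZero n] := @causalLE n _ ≃r @causalLE n _

namespace CausalAut

variable (f : CausalAut n)

lemma symmGen_iff {x y : Fin n → ℝ} :
    Relation.SymmGen causalLE (f x) (f y) ↔ Relation.SymmGen causalLE x y := by
  simp only [Relation.SymmGen, f.map_rel_iff]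

lemma image_causalIcc (x y : Fin n → ℝ) : f '' causalIcc x y = causalIcc (f x) (f y) := by
  ext z
  obtain ⟨z, rfl⟩ := f.surjective z
  simp only [f.injective.mem_set_image, causalIcc, Set.mem_ofPred_eq, f.map_rel_iff]

lemma minkowskiQ_sub_eq_zero_iff (hn : 2 ≤ n) {x y : Fin n → ℝ} :
    minkowskiQ (f y - f x) = 0 ↔ minkowskiQ (y - x) = 0 := by
  rw [minkowskiQ_sub_eq_zero_iff_isChain hn, minkowskiQ_sub_eq_zero_iff_isChain hn, f.symmGen_iff,
    ← f.image_causalIcc, ← f.image_causalIcc, IsChain.image_relIso_iff, IsChain.image_relIso_iff]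

lemma noNullSeparation_image_iff (hn : 2 ≤ n) {s t : Set (Fin n → ℝ)} :
    NoNullSeparation (f '' s) (f '' t) ↔ NoNullSeparation s t := by
  simp only [NoNullSeparation, Set.forall_mem_image, ne_eq, f.minkowskiQ_sub_eq_zero_iff hn]

lemma minkowskiQ_map_add_sub (hn : 2 ≤ n) {ℓ : Fin n → ℝ} (hℓ : minkowskiQ ℓ = 0)
    (x : Fin n → ℝ) : minkowskiQ (f (x + ℓ) - f x) = 0 :=
  (f.minkowskiQ_sub_eq_zero_iff hn).2 (by rwa [add_sub_cancel_left])

lemma map_add_sub_ne_zero {ℓ : Fin n → ℝ} (hℓ0 : ℓ ≠ 0) (x : Fin n → ℝ) :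
    f (x + ℓ) - f x ≠ 0 :=
  sub_ne_zero.2 (f.injective.ne (by simpa using hℓ0))

lemma image_lineThrough (hn : 2 ≤ n) {ℓ : Fin n → ℝ} (hℓ : minkowskiQ ℓ = 0) (hℓ0 : ℓ ≠ 0)
    (x : Fin n → ℝ) : f '' lineThrough x ℓ = lineThrough (f x) (f (x + ℓ) - f x) := by
  ext q
  obtain ⟨p, rfl⟩ := f.surjective q
  rw [f.injective.mem_set_image, mem_lineThrough_iff_of_null hℓ hℓ0,
    mem_lineThrough_iff_of_null (f.minkowskiQ_map_add_sub hn hℓ x) (f.map_add_sub_ne_zero hℓ0 x),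
    add_sub_cancel, f.minkowskiQ_sub_eq_zero_iff hn, f.minkowskiQ_sub_eq_zero_iff hn]

lemma form_sub_eq_zero_of_form_eq_zero (hn : 2 ≤ n) {ℓ : Fin n → ℝ} (hℓ : minkowskiQ ℓ = 0)
    (hℓ0 : ℓ ≠ 0) {x y : Fin n → ℝ} (h : minkowskiForm ℓ (y - x) = 0) :
    minkowskiForm (f (x + ℓ) - f x) (f y - f x) = 0 := by
  have hm := f.minkowskiQ_map_add_sub hn hℓ x
  rw [minkowskiForm_comm] at h
  rcases minkowskiQ_neg_or_eq_smul_of_form_eq_zero hℓ hℓ0 h with hsp | ⟨t, ht⟩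
  · have hsep := noNullSeparation_lineThrough_of_spacelike hℓ h hsp x
    rw [add_sub_cancel, ← f.noNullSeparation_image_iff hn, f.image_lineThrough hn hℓ hℓ0,
      f.image_lineThrough hn hℓ hℓ0] at hsep
    exact (form_eq_zero_of_noNullSeparation hm (f.minkowskiQ_map_add_sub hn hℓ y) hsep).2
  · have hy : f y ∈ f '' lineThrough x ℓ := ⟨y, ⟨t, by dsimp only; rw [← ht, add_sub_cancel]⟩, rfl⟩
    rw [f.image_lineThrough hn hℓ hℓ0] at hy
    obtain ⟨c, hc⟩ := hy
    rw [← hc, add_sub_cancel_left, map_smul, ← minkowskiQ_eq_form, hm, smul_zero]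

lemma form_sub_eq_zero_iff (hn : 2 ≤ n) {ℓ : Fin n → ℝ} (hℓ : minkowskiQ ℓ = 0) (hℓ0 : ℓ ≠ 0)
    (x y : Fin n → ℝ) :
    minkowskiForm (f (x + ℓ) - f x) (f y - f x) = 0 ↔ minkowskiForm ℓ (y - x) = 0 := by
  refine ⟨fun h => ?_, f.form_sub_eq_zero_of_form_eq_zero hn hℓ hℓ0⟩
  simpa using form_sub_eq_zero_of_form_eq_zero f.symm hn (f.minkowskiQ_map_add_sub hn hℓ x)
    (f.map_add_sub_ne_zero hℓ0 x) h

lemma form_sub_sub_eq_zero (hn : 2 ≤ n) {ℓ : Fin n → ℝ} (hℓ : minkowskiQ ℓ = 0) (hℓ0 : ℓ ≠ 0)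
    (x y : Fin n → ℝ) : minkowskiForm (f (x + ℓ) - f x) (f (y + ℓ) - f y) = 0 := by
  by_cases hxy : minkowskiForm ℓ (y - x) = 0
  · have h₁ := (f.form_sub_eq_zero_iff hn hℓ hℓ0 x y).2 hxy
    have h₂ := (f.form_sub_eq_zero_iff hn hℓ hℓ0 x (y + ℓ)).2 (by
      rw [add_sub_right_comm, map_add, hxy, ← minkowskiQ_eq_form, hℓ, add_zero])
    rw [← sub_sub_sub_cancel_right (f (y + ℓ)) (f y) (f x), map_sub, h₁, h₂, sub_zero]
  · -- otherwise the two image hyperplanes meet, and so do their preimages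
    by_contra h
    obtain ⟨z, hz₁, hz₂⟩ := exists_form_eq_and_form_eq (f.minkowskiQ_map_add_sub hn hℓ x)
      (f.minkowskiQ_map_add_sub hn hℓ y) h (minkowskiForm (f (x + ℓ) - f x) (f x))
      (minkowskiForm (f (y + ℓ) - f y) (f y))
    obtain ⟨p, rfl⟩ := f.surjective z
    have e₁ := (f.form_sub_eq_zero_iff hn hℓ hℓ0 x p).1 (by rw [map_sub, hz₁, sub_self])
    have e₂ := (f.form_sub_eq_zero_iff hn hℓ hℓ0 y p).1 (by rw [map_sub, hz₂, sub_self])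
    exact hxy (by rw [← sub_sub_sub_cancel_left x y p, map_sub, e₁, e₂, sub_self])

lemma exists_sub_eq_smul_sub (hn : 2 ≤ n) {ℓ : Fin n → ℝ} (hℓ : minkowskiQ ℓ = 0) (hℓ0 : ℓ ≠ 0)
    (x y : Fin n → ℝ) : ∃ τ : ℝ, τ ≠ 0 ∧ f (y + ℓ) - f y = τ • (f (x + ℓ) - f x) := by
  obtain ⟨τ, hτ⟩ := exists_eq_smul_of_null_of_form_eq_zero (f.minkowskiQ_map_add_sub hn hℓ y)
    (f.minkowskiQ_map_add_sub hn hℓ x) (f.map_add_sub_ne_zero hℓ0 x)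
    (f.form_sub_sub_eq_zero hn hℓ hℓ0 y x)
  refine ⟨τ, ?_, hτ⟩
  rintro rfl
  exact f.map_add_sub_ne_zero hℓ0 y (by rw [hτ, zero_smul])

lemma form_base_sub_eq_zero_iff (hn : 2 ≤ n) {ℓ : Fin n → ℝ} (hℓ : minkowskiQ ℓ = 0) (hℓ0 : ℓ ≠ 0)
    (b x y : Fin n → ℝ) :
    minkowskiForm (f (b + ℓ) - f b) (f y - f x) = 0 ↔ minkowskiForm ℓ (y - x) = 0 := by
  obtain ⟨τ, hτ0, hτ⟩ := f.exists_sub_eq_smul_sub hn hℓ hℓ0 b x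
  rw [← f.form_sub_eq_zero_iff hn hℓ hℓ0 x y, hτ, map_smul, LinearMap.smul_apply, smul_eq_mul,
    mul_eq_zero, or_iff_right hτ0]

lemma fderiv_apply_eq_smul (hn : 2 ≤ n) (hf : Differentiable ℝ f) {ℓ : Fin n → ℝ}
    (hℓ : minkowskiQ ℓ = 0) (hℓ0 : ℓ ≠ 0) (b x : Fin n → ℝ) :
    ∃ c : ℝ, fderiv ℝ f x ℓ = c • (f (b + ℓ) - f b) := by
  have hline (t : ℝ) : f (x + t • ℓ) ∈ lineThrough (f x) (f (x + ℓ) - f x) :=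
    f.image_lineThrough hn hℓ hℓ0 x ▸ ⟨_, ⟨t, rfl⟩, rfl⟩
  obtain ⟨c, hc⟩ := ((hf x).hasFDerivAt.hasLineDerivAt ℓ).exists_eq_smul_of_mem_lineThrough
    (f.map_add_sub_ne_zero hℓ0 x) hline
  obtain ⟨τ, -, hτ⟩ := f.exists_sub_eq_smul_sub hn hℓ hℓ0 b x
  exact ⟨c * τ, by rw [hc, hτ, smul_smul]⟩

lemma minkowskiQ_fderiv_apply (hn : 2 ≤ n) (hf : Differentiable ℝ f) {ℓ : Fin n → ℝ}
    (hℓ : minkowskiQ ℓ = 0) (x : Fin n → ℝ) : minkowskiQ (fderiv ℝ f x ℓ) = 0 := by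
  rcases eq_or_ne ℓ 0 with rfl | hℓ0
  · simpa using hℓ
  obtain ⟨c, hc⟩ := f.fderiv_apply_eq_smul hn hf hℓ hℓ0 x x
  rw [hc, minkowskiQ_smul, f.minkowskiQ_map_add_sub hn hℓ x, mul_zero]

/-- `⟪m', f ·⟫` is constant on the null hyperplanes `⟪ℓ', ·⟫ = const`, so it agrees along the lines
through `x` and `y` in direction `ℓ`; both derivatives are multiples of `f (x + ℓ) - f x`, which
pairs nontrivially with `m'`. -/
lemma fderiv_apply_eq_of_form_eq (hn : 2 ≤ n) (hf : Differentiable ℝ f) {ℓ ℓ' : Fin n → ℝ}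
    (hℓ : minkowskiQ ℓ = 0) (hℓ' : minkowskiQ ℓ' = 0) (hℓℓ' : minkowskiForm ℓ' ℓ ≠ 0)
    {x y : Fin n → ℝ} (hxy : minkowskiForm ℓ' x = minkowskiForm ℓ' y) :
    fderiv ℝ f x ℓ = fderiv ℝ f y ℓ := by
  have hℓ0 : ℓ ≠ 0 := by rintro rfl; simp at hℓℓ'
  have hℓ'0 : ℓ' ≠ 0 := by rintro rfl; simp at hℓℓ'
  set m' := f (x + ℓ') - f x
  set g := LinearMap.toContinuousLinearMap (minkowskiForm m')
  have hlevel : (fun t : ℝ => g (f (x + t • ℓ))) = fun t => g (f (y + t • ℓ)) := by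
    funext t
    have := (f.form_base_sub_eq_zero_iff hn hℓ' hℓ'0 x (y + t • ℓ) (x + t • ℓ)).2 (by
      rw [map_sub, map_add, map_add, hxy, sub_self])
    rwa [map_sub, sub_eq_zero] at this
  have hderiv (z : Fin n → ℝ) :
      HasDerivAt (fun t : ℝ => g (f (z + t • ℓ))) (g (fderiv ℝ f z ℓ)) 0 :=
    g.hasFDerivAt.comp_hasDerivAt 0 ((hf z).hasFDerivAt.hasLineDerivAt ℓ)
  have hg : g (fderiv ℝ f x ℓ) = g (fderiv ℝ f y ℓ) := (hderiv x).unique (hlevel ▸ hderiv y)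
  have hm : minkowskiForm m' (f (x + ℓ) - f x) ≠ 0 := by
    rwa [Ne, f.form_sub_eq_zero_iff hn hℓ' hℓ'0, add_sub_cancel_left]
  obtain ⟨a, ha⟩ := f.fderiv_apply_eq_smul hn hf hℓ hℓ0 x x
  obtain ⟨c, hc⟩ := f.fderiv_apply_eq_smul hn hf hℓ hℓ0 x y
  simp only [g, LinearMap.coe_toContinuousLinearMap', ha, hc, map_smul, smul_eq_mul] at hg
  rw [ha, hc, mul_right_cancel₀ hm hg]

lemma fderiv_apply_eq (hn : 2 ≤ n) (hf : Differentiable ℝ f) {ℓ ℓ₁ ℓ₂ : Fin n → ℝ}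
    (hℓ : minkowskiQ ℓ = 0) (hℓ₁ : minkowskiQ ℓ₁ = 0) (hℓ₂ : minkowskiQ ℓ₂ = 0)
    (h₁ : minkowskiForm ℓ₁ ℓ ≠ 0) (h₂ : minkowskiForm ℓ₂ ℓ ≠ 0) (h₁₂ : minkowskiForm ℓ₁ ℓ₂ ≠ 0)
    (x y : Fin n → ℝ) : fderiv ℝ f x ℓ = fderiv ℝ f y ℓ := by
  obtain ⟨z, hz₁, hz₂⟩ := exists_form_eq_and_form_eq hℓ₁ hℓ₂ h₁₂ (minkowskiForm ℓ₁ x)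
    (minkowskiForm ℓ₂ y)
  exact (f.fderiv_apply_eq_of_form_eq hn hf hℓ hℓ₁ h₁ hz₁.symm).trans
    (f.fderiv_apply_eq_of_form_eq hn hf hℓ hℓ₂ h₂ hz₂)

/-- The null vector `e₀ ± eᵢ` is non-orthogonal to both `e₀ + eⱼ` and `e₀ - eⱼ` for a third
index `j`, and these two are non-orthogonal to each other. -/
lemma fderiv_eq (hn : 3 ≤ n) (hf : Differentiable ℝ f) (x y : Fin n → ℝ) :
    fderiv ℝ f x = fderiv ℝ f y := by
  refine ContinuousLinearMap.coe_injective (LinearMap.eq_of_apply_lightVec (by omega) ?_)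
  intro i hi ε hε
  obtain ⟨j, hj, hji⟩ := exists_ne_zero_ne hn i
  exact f.fderiv_apply_eq (by omega) hf (minkowskiQ_lightVec hi hε)
    (minkowskiQ_lightVec hj (one_pow 2)) (minkowskiQ_lightVec hj (ε := -1) (by norm_num))
    (by simp [form_lightVec hj hi, hji]) (by simp [form_lightVec hj hi, hji])
    (by norm_num [form_lightVec hj hj]) x y

lemma eq_fderiv_add (hn : 3 ≤ n) (hf : Differentiable ℝ f) (x : Fin n → ℝ) :
    f x = fderiv ℝ f 0 x + f 0 :=
  congrFun (eq_of_fderiv_eq hf ((fderiv ℝ f 0).differentiable.add_const (f 0))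
    (fun x => by rw [fderiv_add_const, ContinuousLinearMap.fderiv, f.fderiv_eq hn hf]) 0
    (by simp)) x

end CausalAut

/-- Zeeman's theorem (with a `C¹` assumption): for `n ≥ 3`, a `C¹` bijection of
`ℝⁿ` preserving the causal relation in both directions is of the form
`x ↦ a • (A x) + b` with `a > 0` and `A` an orthochronous Lorentz matrix. -/
theorem zeeman_theorem (n : ℕ) [NeZero n] (hn : 3 ≤ n)
    (F : (Fin n → ℝ) → (Fin n → ℝ))
    (hbij : Function.Bijective F)
    (hC1 : ContDiff ℝ 1 F)
    (hcaus : ∀ x y : Fin n → ℝ, causalLE x y ↔ causalLE (F x) (F y)) :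
    ∃ (a : ℝ) (A : Matrix (Fin n) (Fin n) ℝ) (b : Fin n → ℝ),
      0 < a ∧ IsLorentz A ∧ 0 < A 0 0 ∧
      ∀ x : Fin n → ℝ, F x = a • A.mulVec x + b := by
  let f : CausalAut n := ⟨Equiv.ofBijective F hbij, (hcaus _ _).symm⟩
  have hf : Differentiable ℝ f := hC1.differentiable one_ne_zero
  let T : (Fin n → ℝ) →ₗ[ℝ] (Fin n → ℝ) := fderiv ℝ f 0
  have hF (x : Fin n → ℝ) : F x = T x + F 0 := f.eq_fderiv_add hn hf x
  have hT_inj : Function.Injective T := fun u v h => hbij.injective (by rw [hF u, hF v, h])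
  have hT₀ : IsFutureCausal (T (Pi.single 0 1)) := by
    have h := (hcaus 0 (Pi.single 0 1)).1 (by simp [causalLE, minkowskiQ_single_zero])
    rwa [causalLE_iff_isFutureCausal, hF, add_sub_cancel_right] at h
  have hT : PreservesNull T := fun ℓ hℓ => f.minkowskiQ_fderiv_apply (by omega) hf hℓ 0
  obtain ⟨a, A, ha, hA, hA₀, hTA⟩ := hT.exists_lorentz (by omega) hT_inj hT₀
  exact ⟨a, A, F 0, ha, hA, hA₀, fun x => by rw [hF, hTA]⟩
end

section
/- Let n ≥ 2 and let F : ℝⁿ → ℝⁿ be a smooth bijective map with smooth inverse such that for all x, y ∈ ℝⁿ, x ≤ y if and only if F(x) ≤ F(y), where ≤ is the causal relation of n-dimensional Minkowski space. Then F is a conformal diffeomorphism for the Minkowski quadratic form: for every point x ∈ ℝⁿ there exists λ(x) > 0 such that Q(DF_x(v)) = λ(x) · Q(v) for every vector v ∈ ℝⁿ, where DF_x denotes the (total) derivative of F at x. -/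
namespace MinkAux

variable {n : ℕ} [NeZero n]

/-- Minkowski bilinear form. -/
def mB (v w : Fin n → ℝ) : ℝ :=
  v 0 * w 0 - ∑ i ∈ Finset.univ.erase (0 : Fin n), v i * w i

lemma mQ_eq_mB (v : Fin n → ℝ) : minkowskiQ v = mB v v := by
  simp [minkowskiQ, mB, sq]

lemma mB_add_right (a b c : Fin n → ℝ) : mB a (b + c) = mB a b + mB a c := by
  simp only [mB, Pi.add_apply, mul_add, Finset.sum_add_distrib]; ring

lemma mB_smul_right (c : ℝ) (a b : Fin n → ℝ) : mB a (c • b) = c * mB a b := by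
  simp only [mB, Pi.smul_apply, smul_eq_mul, Finset.mul_sum]
  rw [mul_sub, Finset.mul_sum]
  congr 1
  · ring
  · apply Finset.sum_congr rfl
    intro i _; ring

lemma mB_comm (a b : Fin n → ℝ) : mB a b = mB b a := by
  simp only [mB, mul_comm]

lemma mB_add_left (a b c : Fin n → ℝ) : mB (a + b) c = mB a c + mB b c := by
  rw [mB_comm, mB_add_right, mB_comm c a, mB_comm c b]

lemma mB_smul_left (c : ℝ) (a b : Fin n → ℝ) : mB (c • a) b = c * mB a b := by
  rw [mB_comm, mB_smul_right, mB_comm]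

lemma mB_neg_right (a b : Fin n → ℝ) : mB a (-b) = - mB a b := by
  have := mB_smul_right (-1 : ℝ) a b
  simpa using this

lemma mQ_add (v w : Fin n → ℝ) :
    minkowskiQ (v + w) = minkowskiQ v + 2 * mB v w + minkowskiQ w := by
  rw [mQ_eq_mB, mQ_eq_mB, mQ_eq_mB, mB_add_left, mB_add_right, mB_add_right, mB_comm w v]
  ring

lemma mQ_smul (c : ℝ) (v : Fin n → ℝ) : minkowskiQ (c • v) = c ^ 2 * minkowskiQ v := by
  rw [mQ_eq_mB, mQ_eq_mB, mB_smul_left, mB_smul_right]; ring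

lemma mQ_neg (v : Fin n → ℝ) : minkowskiQ (-v) = minkowskiQ v := by
  have := mQ_smul (-1 : ℝ) v
  simpa using this

lemma mQ_zero : minkowskiQ (0 : Fin n → ℝ) = 0 := by
  simp [minkowskiQ]

lemma mQ_continuous : Continuous (minkowskiQ (n := n)) := by
  unfold minkowskiQ
  exact ((continuous_apply 0).pow 2).sub
    (continuous_finset_sum _ fun i _ => (continuous_apply i).pow 2)

/-- The future cone. -/
def cone (n : ℕ) [NeZero n] : Set (Fin n → ℝ) :=
  {v | 0 ≤ minkowskiQ v ∧ 0 ≤ v 0}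

lemma causalLE_iff (x y : Fin n → ℝ) : causalLE x y ↔ (y - x) ∈ cone n := Iff.rfl

lemma cone_closed : IsClosed (cone n) := by
  have h1 : IsClosed {v : Fin n → ℝ | 0 ≤ minkowskiQ v} :=
    isClosed_le continuous_const mQ_continuous
  have h2 : IsClosed {v : Fin n → ℝ | 0 ≤ v 0} :=
    isClosed_le continuous_const (continuous_apply 0)
  exact h1.inter h2

lemma cone_smul {c : ℝ} (hc : 0 ≤ c) {v : Fin n → ℝ} (hv : v ∈ cone n) :
    c • v ∈ cone n := by
  constructor
  · rw [mQ_smul]; exact mul_nonneg (sq_nonneg c) hv.1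
  · simpa using mul_nonneg hc hv.2


lemma deriv_maps_cone {H : (Fin n → ℝ) → (Fin n → ℝ)} (hH : Differentiable ℝ H)
    (hmono : ∀ a b : Fin n → ℝ, causalLE a b → causalLE (H a) (H b))
    (x v : Fin n → ℝ) (hv : v ∈ cone n) :
    fderiv ℝ H x v ∈ cone n := by
  set f : ℝ → (Fin n → ℝ) := fun t => H (x + t • v) with hf
  have hline : HasDerivAt (fun t : ℝ => x + t • v) v 0 := by
    have h1 : HasDerivAt (fun t : ℝ => t • v) ((1:ℝ) • v) 0 :=
      (hasDerivAt_id (0:ℝ)).smul_const v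
    simpa using h1.const_add x
  have hdf : HasDerivAt f (fderiv ℝ H x v) 0 := by
    have h2 : HasFDerivAt H (fderiv ℝ H x) (x + (0:ℝ) • v) := by
      simpa using (hH (x + (0:ℝ) • v)).hasFDerivAt
    have := h2.comp_hasDerivAt 0 hline
    exact this
  have hslope : Filter.Tendsto (slope f 0) (nhdsWithin 0 (Set.Ioi 0)) (nhds (fderiv ℝ H x v)) := by
    have := hasDerivAt_iff_tendsto_slope.mp hdf
    exact this.mono_left (nhdsWithin_mono 0 (fun t ht => ne_of_gt ht))
  have hmem : ∀ t ∈ Set.Ioi (0:ℝ), slope f 0 t ∈ cone n := by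
    intro t ht
    have htpos : (0:ℝ) < t := ht
    have hle : causalLE x (x + t • v) := by
      refine ⟨?_, ?_⟩
      · simp only [add_sub_cancel_left]
        rw [mQ_smul]
        exact mul_nonneg (sq_nonneg t) hv.1
      · simp only [add_sub_cancel_left, Pi.smul_apply, smul_eq_mul]
        exact mul_nonneg htpos.le hv.2
    have hc : f t - f 0 ∈ cone n := by
      have := hmono _ _ hle
      simpa [hf, causalLE_iff] using this
    have : slope f 0 t = t⁻¹ • (f t - f 0) := by
      simp [slope_def_field, slope, vsub_eq_sub]
    rw [this]
    exact cone_smul (inv_nonneg.mpr htpos.le) hc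
  exact cone_closed.mem_of_tendsto hslope
    (Filter.eventually_of_mem self_mem_nhdsWithin hmem)


lemma mB_zero_right (a : Fin n → ℝ) : mB a (0 : Fin n → ℝ) = 0 := by
  simp [mB]

lemma time_ne_zero_of_mQ_pos {w : Fin n → ℝ} (hw : 0 < minkowskiQ w) : w 0 ≠ 0 := by
  intro h0
  have : minkowskiQ w ≤ 0 := by
    rw [minkowskiQ, h0]
    simp only [ne_eq, zero_pow, OfNat.ofNat_ne_zero, not_false_eq_true, zero_sub,
      neg_nonpos]
    exact Finset.sum_nonneg fun i _ => sq_nonneg _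
  linarith

end MinkAux

open MinkAux in

/-- A smooth causal isomorphism of Minkowski space (`n ≥ 2`) is a conformal
diffeomorphism for the Minkowski quadratic form: at each point `x` there is
`λ(x) > 0` with `Q (DF_x v) = λ(x) * Q v` for every vector `v`. -/
theorem causal_isomorphism_is_conformal (n : ℕ) [NeZero n] (hn : 2 ≤ n)
    (F G : (Fin n → ℝ) → (Fin n → ℝ))
    (hbij : Function.Bijective F)
    (hF : ContDiff ℝ (⊤ : ℕ∞) F) (hG : ContDiff ℝ (⊤ : ℕ∞) G)
    (hGF : Function.LeftInverse G F)
    (hFG : Function.RightInverse G F)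
    (hcaus : ∀ x y : Fin n → ℝ, causalLE x y ↔ causalLE (F x) (F y)) :
    ∀ x : Fin n → ℝ, ∃ lam : ℝ, 0 < lam ∧
      ∀ v : Fin n → ℝ, minkowskiQ (fderiv ℝ F x v) = lam * minkowskiQ v := by
  intro x
  have hFd : Differentiable ℝ F := hF.differentiable (by simp)
  have hGd : Differentiable ℝ G := hG.differentiable (by simp)
  set L := fderiv ℝ F x with hLdef
  set L' := fderiv ℝ G (F x) with hL'def
  -- composition identities
  have hL'L : ∀ v, L' (L v) = v := by
    intro v
    have hcomp : fderiv ℝ (G ∘ F) x = (fderiv ℝ G (F x)).comp (fderiv ℝ F x) :=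
      fderiv_comp x (hGd _) (hFd _)
    have hid : G ∘ F = id := hGF.comp_eq_id
    rw [hid, fderiv_id] at hcomp
    have := congrArg (fun (T : (Fin n → ℝ) →L[ℝ] (Fin n → ℝ)) => T v) hcomp
    simpa using this.symm
  have hLL' : ∀ v, L (L' v) = v := by
    intro v
    have hcomp : fderiv ℝ (F ∘ G) (F x) = (fderiv ℝ F (G (F x))).comp (fderiv ℝ G (F x)) :=
      fderiv_comp (F x) (hFd _) (hGd _)
    have hid : F ∘ G = id := hFG.comp_eq_id
    rw [hid, fderiv_id, hGF x] at hcomp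
    have := congrArg (fun (T : (Fin n → ℝ) →L[ℝ] (Fin n → ℝ)) => T v) hcomp
    simpa using this.symm
  -- monotonicity
  have hmonoF : ∀ a b : Fin n → ℝ, causalLE a b → causalLE (F a) (F b) :=
    fun a b h => (hcaus a b).mp h
  have hmonoG : ∀ a b : Fin n → ℝ, causalLE a b → causalLE (G a) (G b) := by
    intro a b h
    have := (hcaus (G a) (G b)).mpr
    rw [hFG a, hFG b] at this
    exact this h
  have hL : ∀ v ∈ cone n, L v ∈ cone n :=
    fun v hv => deriv_maps_cone hFd hmonoF x v hv
  have hL' : ∀ v ∈ cone n, L' v ∈ cone n :=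
    fun v hv => deriv_maps_cone hGd hmonoG (F x) v hv
  -- Step 1: L kills null vectors in the cone
  have hnull0 : ∀ v : Fin n → ℝ, v ∈ cone n → minkowskiQ v = 0 → minkowskiQ (L v) = 0 := by
    intro v hv hQv
    by_contra hne
    have hq : 0 < minkowskiQ (L v) := lt_of_le_of_ne (hL v hv).1 (Ne.symm hne)
    have hv0 : v ≠ 0 := by
      rintro rfl
      rw [map_zero, mQ_zero] at hq
      exact lt_irrefl 0 hq
    set u : Fin n → ℝ := fun i => if i = 0 then -v 0 else v i with hu
    have hBu : mB v u = -(∑ i, (v i)^2) := by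
      have h1 : ∑ i ∈ Finset.univ.erase (0 : Fin n), v i * u i
          = ∑ i ∈ Finset.univ.erase (0 : Fin n), (v i)^2 := by
        apply Finset.sum_congr rfl
        intro i hi
        have : i ≠ 0 := (Finset.mem_erase.mp hi).1
        simp [hu, this, sq]
      have h2 : (∑ i, (v i)^2)
          = (v 0)^2 + ∑ i ∈ Finset.univ.erase (0 : Fin n), (v i)^2 :=
        (Finset.add_sum_erase _ _ (Finset.mem_univ (0 : Fin n))).symm
      rw [mB, h1, h2]
      simp only [hu, if_pos rfl]
      ring
    have hsum : 0 < ∑ i, (v i)^2 := by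
      obtain ⟨j, hj⟩ := Function.ne_iff.mp hv0
      exact Finset.sum_pos' (fun i _ => sq_nonneg _)
        ⟨j, Finset.mem_univ j, lt_of_le_of_ne (sq_nonneg _) (Ne.symm (pow_ne_zero 2 hj))⟩
    have hc : mB v u < 0 := by rw [hBu]; linarith
    -- eventual facts near s = 0
    have hcontQ : Continuous fun s : ℝ => minkowskiQ (L v + s • L u) := by
      apply mQ_continuous.comp
      exact continuous_const.add (continuous_id.smul continuous_const)
    have hcont0 : Continuous fun s : ℝ => (L v + s • L u) 0 := by
      exact (continuous_apply 0).comp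
        (continuous_const.add (continuous_id.smul continuous_const))
    have hLv0 : 0 < (L v) 0 :=
      lt_of_le_of_ne (hL v hv).2 (Ne.symm (time_ne_zero_of_mQ_pos hq))
    have hP1 : ∀ᶠ s in nhds (0:ℝ), 0 < minkowskiQ (L v + s • L u) := by
      have : (0:ℝ) < minkowskiQ (L v + (0:ℝ) • L u) := by simpa using hq
      exact (isOpen_lt continuous_const hcontQ).mem_nhds this
    have hP2 : ∀ᶠ s in nhds (0:ℝ), 0 < (L v + s • L u) 0 := by
      have : (0:ℝ) < (L v + (0:ℝ) • L u) 0 := by simpa using hLv0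
      exact (isOpen_lt continuous_const hcont0).mem_nhds this
    have hP3 : ∀ᶠ s in nhds (0:ℝ), 2 * mB v u + s * minkowskiQ u < 0 := by
      have hcont3 : Continuous fun s : ℝ => 2 * mB v u + s * minkowskiQ u :=
        continuous_const.add (continuous_id.mul continuous_const)
      have : 2 * mB v u + (0:ℝ) * minkowskiQ u < 0 := by simpa using by linarith
      exact (isOpen_lt hcont3 continuous_const).mem_nhds this
    have hall : ∀ᶠ s in nhdsWithin (0:ℝ) (Set.Ioi 0),
        (0 < minkowskiQ (L v + s • L u) ∧ 0 < (L v + s • L u) 0 ∧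
          2 * mB v u + s * minkowskiQ u < 0) ∧ 0 < s := by
      refine Filter.Eventually.and ?_ ?_
      · exact ((hP1.and (hP2.and hP3)).filter_mono nhdsWithin_le_nhds)
      · exact Filter.eventually_of_mem self_mem_nhdsWithin (fun s hs => hs)
    obtain ⟨s, ⟨hs1, hs2, hs3⟩, hspos⟩ := hall.exists
    -- the point v + s • u
    have hQvs : minkowskiQ (v + s • u) = s * (2 * mB v u + s * minkowskiQ u) := by
      rw [mQ_add, mQ_smul, mB_smul_right, hQv]
      ring
    have hQneg : minkowskiQ (v + s • u) < 0 := by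
      rw [hQvs]
      exact mul_neg_of_pos_of_neg hspos hs3
    have hLmem : L (v + s • u) ∈ cone n := by
      have hrw : L (v + s • u) = L v + s • L u := by
        rw [map_add, map_smul]
      exact ⟨by rw [hrw]; exact hs1.le, by rw [hrw]; exact hs2.le⟩
    have hmem2 : v + s • u ∈ cone n := by
      have := hL' _ hLmem
      rwa [hL'L] at this
    exact absurd hmem2.1 (not_le.mpr hQneg)
  -- Step 1': L kills all null vectors
  have hnull : ∀ v : Fin n → ℝ, minkowskiQ v = 0 → minkowskiQ (L v) = 0 := by
    intro v hQv
    rcases le_or_gt 0 (v 0) with h0 | h0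
    · exact hnull0 v ⟨hQv.ge, h0⟩ hQv
    · have h1 : minkowskiQ (L (-v)) = 0 := by
        refine hnull0 (-v) ⟨?_, ?_⟩ ?_
        · rw [mQ_neg]; exact hQv.ge
        · simpa using h0.le
        · rw [mQ_neg]; exact hQv
      rw [map_neg, mQ_neg] at h1
      exact h1
  -- Step 2: polarization
  set e0 : Fin n → ℝ := fun i => if i = 0 then (1:ℝ) else 0 with he0
  have hQe0 : minkowskiQ e0 = 1 := by
    have : ∑ i ∈ Finset.univ.erase (0 : Fin n), (e0 i)^2 = 0 := by
      apply Finset.sum_eq_zero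
      intro i hi
      have : i ≠ 0 := (Finset.mem_erase.mp hi).1
      simp [he0, this]
    simp [minkowskiQ, this, he0]
  set lam := minkowskiQ (L e0) with hlam
  have hconf : ∀ v : Fin n → ℝ, minkowskiQ (L v) = lam * minkowskiQ v := by
    intro v
    set w : Fin n → ℝ := v - (v 0) • e0 with hw
    have hw0 : w 0 = 0 := by simp [hw, he0]
    have hwi : ∀ i : Fin n, i ≠ 0 → w i = v i := by
      intro i hi; simp [hw, he0, hi]
    set S := ∑ i ∈ Finset.univ.erase (0 : Fin n), (v i)^2 with hS
    have hSnn : 0 ≤ S := Finset.sum_nonneg fun i _ => sq_nonneg _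
    set r := Real.sqrt S with hr
    have hr2 : r ^ 2 = S := Real.sq_sqrt hSnn
    have hrnn : 0 ≤ r := Real.sqrt_nonneg _
    -- sums of squares of w agree with S
    have hsumw : ∀ c : ℝ, ∑ i ∈ Finset.univ.erase (0 : Fin n), ((c • e0 + w) i)^2 = S := by
      intro c
      apply Finset.sum_congr rfl
      intro i hi
      have hi0 : i ≠ 0 := (Finset.mem_erase.mp hi).1
      simp [he0, hi0, hwi i hi0]
    have hsumw' : ∀ c : ℝ, ∑ i ∈ Finset.univ.erase (0 : Fin n), ((c • e0 - w) i)^2 = S := by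
      intro c
      apply Finset.sum_congr rfl
      intro i hi
      have hi0 : i ≠ 0 := (Finset.mem_erase.mp hi).1
      simp [he0, hi0, hwi i hi0]
    have hQa : minkowskiQ (r • e0 + w) = 0 := by
      rw [minkowskiQ, hsumw]
      simp [he0, hw0, hr2]
    have hQa' : minkowskiQ (r • e0 - w) = 0 := by
      rw [minkowskiQ, hsumw']
      simp [he0, hw0, hr2]
    have hqa : minkowskiQ (L (r • e0 + w)) = 0 := hnull _ hQa
    have hqa' : minkowskiQ (L (r • e0 - w)) = 0 := hnull _ hQa'
    have hexp : minkowskiQ (L (r • e0 + w))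
        = r^2 * lam + 2 * (r * mB (L e0) (L w)) + minkowskiQ (L w) := by
      rw [map_add, map_smul, mQ_add, mQ_smul, mB_smul_left]
    have hexp' : minkowskiQ (L (r • e0 - w))
        = r^2 * lam - 2 * (r * mB (L e0) (L w)) + minkowskiQ (L w) := by
      have : L (r • e0 - w) = r • L e0 + (- L w) := by
        rw [map_sub, map_smul]; abel
      rw [this, mQ_add, mQ_smul, mB_smul_left, mB_neg_right, mQ_neg]
      ring
    rw [hexp] at hqa
    rw [hexp'] at hqa'
    have hqw : minkowskiQ (L w) = - (r^2 * lam) := by linarith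
    have hcross : r * mB (L e0) (L w) = 0 := by linarith
    have hmB : v 0 * mB (L e0) (L w) = 0 := by
      rcases eq_or_lt_of_le hSnn with hS0 | hS0
      · -- S = 0 → w = 0
        have hw00 : w = 0 := by
          funext i
          by_cases hi : i = 0
          · rw [hi, hw0]; rfl
          · have : (v i)^2 = 0 := by
              have := (Finset.sum_eq_zero_iff_of_nonneg
                (fun j _ => sq_nonneg (v j))).mp hS0.symm i
                (Finset.mem_erase.mpr ⟨hi, Finset.mem_univ i⟩)
              exact this
            have : v i = 0 := by nlinarith [sq_nonneg (v i)]
            rw [hwi i hi, this]; rfl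
        rw [hw00, map_zero, mB_zero_right, mul_zero]
      · have hrpos : 0 < r := Real.sqrt_pos.mpr hS0
        have : mB (L e0) (L w) = 0 := by
          rcases mul_eq_zero.mp hcross with h | h
          · exact absurd h (ne_of_gt hrpos)
          · exact h
        rw [this, mul_zero]
    have hvdec : v = (v 0) • e0 + w := by
      funext i
      by_cases hi : i = 0
      · subst hi; simp [hw, he0]
      · simp [hw, he0, hi]
    have hQv : minkowskiQ v = (v 0)^2 - S := by
      rw [minkowskiQ]
    calc minkowskiQ (L v) = minkowskiQ ((v 0) • L e0 + L w) := by
          rw [← map_smul, ← map_add, ← hvdec]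
      _ = (v 0)^2 * lam + 2 * ((v 0) * mB (L e0) (L w)) + minkowskiQ (L w) := by
          rw [mQ_add, mQ_smul, mB_smul_left]
      _ = lam * minkowskiQ v := by
          rw [hmB, hqw, hQv, ← hr2]; ring
  -- Step 3: lam > 0
  have he0cone : e0 ∈ cone n := ⟨by rw [hQe0]; norm_num, by simp [he0]⟩
  have hlamnn : 0 ≤ lam := (hL e0 he0cone).1
  have hlamne : lam ≠ 0 := by
    intro h0
    have h1 : minkowskiQ (L (L' e0)) = lam * minkowskiQ (L' e0) := hconf _
    rw [hLL', hQe0, h0, zero_mul] at h1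
    exact one_ne_zero h1
  exact ⟨lam, lt_of_le_of_ne hlamnn (Ne.symm hlamne), hconf⟩
end
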